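/- Let (X, ⊥, F) be an O-space. Then for any family {A_i}_{i ∈ I} of members of F and any B ∈ F: (⋃_{i ∈ I} A_i) ⊗ B = cl(⋃_{i ∈ I} (A_i ⊗ B)) and B ⊕ (⋂_{i ∈ I} A_i) = ⋂_{i ∈ I} (B ⊕ A_i). -/
import Mathlib


variable {X : Type*}

/-- Orthogonal complement: `A^⊥ = {b : b ⊥ a for all a ∈ A}`. -/
def oc (R : X → X → Prop) (A : Set X) : Set X := {b | ∀ a ∈ A, R b a}

/-- Closure: `cl(A) = (A^⊥)^⊥`. -/
def ocl (R : X → X → Prop) (A : Set X) : Set X := oc R (oc R A)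

/-- The zero set `Z = {y : y ⊥ x for all x}`. -/
def zset (R : X → X → Prop) : Set X := {y | ∀ x, R y x}

/-- Sasaki projection `A ⊗ B = cl(B) ∩ (cl(B) ∩ A^⊥)^⊥`. -/
def sproj (R : X → X → Prop) (A B : Set X) : Set X :=
  ocl R B ∩ oc R (ocl R B ∩ oc R A)

/-- Dual of the Sasaki projection: `A ⊕ B = (B^⊥ ⊗ A^⊥)^⊥`. -/
def sdual (R : X → X → Prop) (A B : Set X) : Set X :=
  oc R (sproj R (oc R B) (oc R A))

/-- Set orthogonality: `A ⊥ B` iff `a ⊥ b` for all `a ∈ A`, `b ∈ B`. -/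
def orth (R : X → X → Prop) (A B : Set X) : Prop := ∀ a ∈ A, ∀ b ∈ B, R a b

/-- An O-space: a symmetric relation satisfying Z, together with a family `F`
of subsets satisfying properties F, O and A. -/
structure IsOSpace (R : X → X → Prop) (F : Set (Set X)) : Prop where
  symm : ∀ x y : X, R x y → R y x
  zero : ∀ x : X, R x x → x ∈ zset R
  flats : ∀ A ∈ F, A = ocl R A
  singcl_mem : ∀ x : X, ocl R {x} ∈ F
  z_mem : zset R ∈ F
  oc_mem : ∀ A ∈ F, oc R A ∈ F
  sproj_mem : ∀ A ∈ F, ∀ B ∈ F, sproj R A B ∈ F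
  o1 : ∀ x : X, ∀ A ∈ F, x ∈ ocl R (sproj R {x} A ∪ sproj R {x} (oc R A))
  o2 : ∀ x : X, ∀ A ∈ F, sproj R {x} A ⊆ ocl R ({x} ∪ sproj R {x} (oc R A))
  a : ∀ A ∈ F, ∀ B ∈ F, sproj R A B ⊆ ⋃ a ∈ A, sproj R {a} B

section Aux

variable {R : X → X → Prop} {F : Set (Set X)}

lemma oc_anti {A B : Set X} (h : A ⊆ B) : oc R B ⊆ oc R A :=
  fun _ hb a ha => hb a (h ha)

lemma subset_ocl (hs : ∀ x y : X, R x y → R y x) (A : Set X) : A ⊆ ocl R A :=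
  fun a ha b hb => hs b a (hb a ha)

lemma oc_ocl (hs : ∀ x y : X, R x y → R y x) (A : Set X) :
    oc R (ocl R A) = oc R A :=
  Set.Subset.antisymm (oc_anti (subset_ocl hs A)) (subset_ocl hs (oc R A))

lemma ocl_oc (hs : ∀ x y : X, R x y → R y x) (A : Set X) :
    ocl R (oc R A) = oc R A := oc_ocl hs A

lemma ocl_mono {A B : Set X} (h : A ⊆ B) : ocl R A ⊆ ocl R B :=
  oc_anti (oc_anti h)

lemma ocl_ocl (hs : ∀ x y : X, R x y → R y x) (A : Set X) :
    ocl R (ocl R A) = ocl R A := ocl_oc hs (oc R A)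

lemma sproj_mono_left {A A' B : Set X} (h : A ⊆ A') :
    sproj R A B ⊆ sproj R A' B :=
  Set.inter_subset_inter subset_rfl
    (oc_anti (Set.inter_subset_inter subset_rfl (oc_anti h)))

lemma sproj_congr {A A' : Set X} (h : oc R A = oc R A') (B : Set X) :
    sproj R A B = sproj R A' B := by
  unfold sproj; rw [h]

lemma sproj_flat (hs : ∀ x y : X, R x y → R y x) (A B : Set X) :
    ocl R (sproj R A B) = sproj R A B := by
  refine Set.Subset.antisymm ?_ (subset_ocl hs _)
  intro z hz
  refine ⟨?_, ?_⟩
  · exact (ocl_ocl hs B) ▸ (ocl_mono Set.inter_subset_left hz)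
  · exact (ocl_oc hs (ocl R B ∩ oc R A)) ▸ (ocl_mono Set.inter_subset_right hz)

lemma oc_iUnion {ι : Sort*} (D : ι → Set X) :
    oc R (⋃ i, D i) = ⋂ i, oc R (D i) := by
  ext b
  simp only [oc, Set.mem_iUnion, Set.mem_iInter, Set.mem_setOf_eq]
  constructor
  · intro hb i a ha; exact hb a ⟨i, ha⟩
  · rintro hb a ⟨i, ha⟩; exact hb i a ha

lemma key (h : IsOSpace R F) (C : Set X) {B : Set X} (hB : B ∈ F) :
    sproj R C B ⊆ ocl R (⋃ x ∈ C, sproj R {x} B) := by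
  intro z hz
  obtain ⟨hzB, hz2⟩ := hz
  set U := ⋃ x ∈ C, sproj R {x} B with hU
  have hoB : ocl R (oc R B) = oc R B := ocl_oc h.symm B
  have claim1 : ∀ v ∈ oc R U, v ∈ ocl R B → v ∈ oc R C := by
    intro v hvU hvB x hx
    have hv : v ∈ oc R (sproj R {x} B ∪ sproj R {x} (oc R B)) := by
      intro u hu
      rcases hu with hu | hu
      · exact hvU u (Set.mem_biUnion hx hu)
      · exact hvB u (hoB ▸ hu.1)
    exact h.symm _ _ (h.o1 x B hB v hv)
  have claim2 : ∀ w ∈ oc R U, sproj R {w} B ⊆ oc R U := by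
    intro w hw
    refine (h.o2 w B hB).trans ?_
    have hsub : ({w} : Set X) ∪ sproj R {w} (oc R B) ⊆ oc R U := by
      intro u hu
      rcases hu with hu | hu
      · rw [Set.mem_singleton_iff] at hu; subst hu; exact hw
      · have huB : u ∈ oc R B := hoB ▸ hu.1
        intro t ht
        simp only [hU, Set.mem_iUnion] at ht
        obtain ⟨x, hx, ht⟩ := ht
        exact h.symm _ _ (ht.1 u huB)
    calc ocl R ({w} ∪ sproj R {w} (oc R B)) ⊆ ocl R (oc R U) := ocl_mono hsub
      _ = oc R U := ocl_oc h.symm U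
  intro w hw
  have hzorth : z ∈ oc R (sproj R {w} B ∪ sproj R {w} (oc R B)) := by
    intro v hv
    rcases hv with hv | hv
    · exact hz2 v ⟨hv.1, claim1 v (claim2 w hw hv) hv.1⟩
    · exact hzB v (hoB ▸ hv.1)
  exact h.symm _ _ (h.o1 w B hB z hzorth)

lemma part1 (h : IsOSpace R F) {ι : Type*} (A : ι → Set X) {B : Set X}
    (hB : B ∈ F) :
    sproj R (⋃ i, A i) B = ocl R (⋃ i, sproj R (A i) B) := by
  refine Set.Subset.antisymm ?_ ?_
  · refine (key h (⋃ i, A i) hB).trans (ocl_mono ?_)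
    intro u hu
    simp only [Set.mem_iUnion] at hu ⊢
    obtain ⟨x, ⟨i, hxi⟩, hu⟩ := hu
    exact ⟨i, sproj_mono_left (Set.singleton_subset_iff.2 hxi) hu⟩
  · rw [← sproj_flat h.symm (⋃ i, A i) B]
    exact ocl_mono (Set.iUnion_subset fun i =>
      sproj_mono_left (Set.subset_iUnion A i))

end Aux

theorem stmt5 (R : X → X → Prop) (F : Set (Set X)) (h : IsOSpace R F)
    (I : Type*) (A : I → Set X) (hA : ∀ i, A i ∈ F) (B : Set X) (hB : B ∈ F) :
    sproj R (⋃ i, A i) B = ocl R (⋃ i, sproj R (A i) B) ∧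
    sdual R B (⋂ i, A i) = ⋂ i, sdual R B (A i) := by

  have hflat : ∀ i, ocl R (A i) = A i := fun i => (h.flats _ (hA i)).symm
  constructor
  · exact part1 h A hB
  · have hoBF : oc R B ∈ F := h.oc_mem B hB
    have h1 : oc R (oc R (⋂ i, A i)) = ⋂ i, A i := by
      refine Set.Subset.antisymm ?_ (subset_ocl h.symm _)
      refine Set.subset_iInter fun i => ?_
      exact (hflat i) ▸ ocl_mono (Set.iInter_subset _ i)
    have h2 : oc R (⋃ i, oc R (A i)) = ⋂ i, A i := by
      rw [oc_iUnion]
      exact Set.iInter_congr fun i => hflat i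
    have hcongr : sproj R (oc R (⋂ i, A i)) (oc R B)
        = sproj R (⋃ i, oc R (A i)) (oc R B) :=
      sproj_congr (h1.trans h2.symm) _
    show oc R (sproj R (oc R (⋂ i, A i)) (oc R B)) = _
    rw [hcongr, part1 h (fun i => oc R (A i)) hoBF, oc_ocl h.symm, oc_iUnion]
    rfl
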